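/- (Main theorem.) Assume the genericity condition and B > B*. A subset x ⊆ E minimizes H over all subsets of E (i.e., H(x) ≤ H(x′) for every x′ ⊆ E) if and only if x is a minimum-cost maximal matching of G̃. -/
import Mathlib


open Finset

/-- Points of the plane `ℝ²`. -/
abbrev Pt : Type := ℝ × ℝ

/-- Vertices of the bipartite graph `G̃(X,Y)`: `Sum.inl z` represents the off-diagonal
point `z`, and `Sum.inr z` represents the diagonal vertex `Δ_z`, tagged by its source
point `z` (so distinct points give distinct diagonal vertices, as in `U = X ⊔ Δ_Y`,
`V = Y ⊔ Δ_X`). -/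
abbrev Vtx : Type := Pt ⊕ Pt

/-- Diagonal projection `Δ_z = ((c+d)/2, (c+d)/2)` for `z = (c,d)`. -/
noncomputable def diagProj (z : Pt) : Pt := ((z.1 + z.2) / 2, (z.1 + z.2) / 2)

/-- The point of `ℝ²` represented by a vertex. -/
noncomputable def pos : Vtx → Pt
  | Sum.inl z => z
  | Sum.inr z => diagProj z

/-- The edge set `E` of `G̃(X,Y)`: all pairs `(a, b)` with `a ∈ X`, `b ∈ Y`, together
with the pendant edges `(a, Δ_a)` for `a ∈ X` and `(Δ_b, b)` for `b ∈ Y`.  First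
components are vertices of `U = X ⊔ Δ_Y`, second components vertices of `V = Y ⊔ Δ_X`. -/
noncomputable def edges (X Y : Finset Pt) : Finset (Vtx × Vtx) :=
  ((X ×ˢ Y).image fun ab => ((Sum.inl ab.1, Sum.inl ab.2) : Vtx × Vtx)) ∪
    (X.image fun a => ((Sum.inl a, Sum.inr a) : Vtx × Vtx)) ∪
    (Y.image fun b => ((Sum.inr b, Sum.inl b) : Vtx × Vtx))

/-- A matching: each (left or right) vertex is adjacent to at most one edge of `x`. -/
def IsMatching (x : Finset (Vtx × Vtx)) : Prop :=
  ∀ e ∈ x, ∀ e' ∈ x, e ≠ e' → e.1 ≠ e'.1 ∧ e.2 ≠ e'.2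

/-- A maximal matching among the subsets of the edge set `E`: a matching not properly
contained in another matching. -/
def IsMaximalMatching (E x : Finset (Vtx × Vtx)) : Prop :=
  x ⊆ E ∧ IsMatching x ∧ ∀ y, y ⊆ E → IsMatching y → x ⊆ y → x = y

/-- The `ℓ_q` norm of a vector of `ℝ²`. -/
noncomputable def lqNorm (q : ℝ) (z : Pt) : ℝ := (|z.1| ^ q + |z.2| ^ q) ^ (1 / q)

/-- The edge weight `ω(u,v) = ‖u − v‖_q^p`. -/
noncomputable def edgeWeight (p q : ℝ) (u v : Vtx) : ℝ := lqNorm q (pos u - pos v) ^ p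

/-- The cost of a matching, `C(x) = Σ_{e ∈ x} ω(e)`. -/
noncomputable def cost (p q : ℝ) (x : Finset (Vtx × Vtx)) : ℝ :=
  ∑ e ∈ x, edgeWeight p q e.1 e.2

/-- `F_c(x) = Σ_{(u,v) ∈ E} ω(u,v) · x_{u,v}`, identifying a subset `x ⊆ E` with its
indicator vector in `{0,1}^E`. -/
noncomputable def Fc (p q : ℝ) (E x : Finset (Vtx × Vtx)) : ℝ :=
  ∑ e ∈ E, edgeWeight p q e.1 e.2 * (if e ∈ x then 1 else 0)

/-- `F_U(x) = B · Σ_{u ∈ X} (1 − Σ_{v : (u,v) ∈ E} x_{u,v})²`. -/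
noncomputable def FU (B : ℝ) (X : Finset Pt) (E x : Finset (Vtx × Vtx)) : ℝ :=
  B * ∑ u ∈ X,
    (1 - ∑ e ∈ E.filter (fun e => e.1 = Sum.inl u), (if e ∈ x then (1 : ℝ) else 0)) ^ 2

/-- `F_V(x) = B · Σ_{v ∈ Y} (1 − Σ_{u : (u,v) ∈ E} x_{u,v})²`. -/
noncomputable def FV (B : ℝ) (Y : Finset Pt) (E x : Finset (Vtx × Vtx)) : ℝ :=
  B * ∑ v ∈ Y,
    (1 - ∑ e ∈ E.filter (fun e => e.2 = Sum.inl v), (if e ∈ x then (1 : ℝ) else 0)) ^ 2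

/-- The QUBO Hamiltonian `H = F_c + F_U + F_V` for the graph `G̃(X,Y)`. -/
noncomputable def Ham (B p q : ℝ) (X Y : Finset Pt) (x : Finset (Vtx × Vtx)) : ℝ :=
  Fc p q (edges X Y) x + FU B X (edges X Y) x + FV B Y (edges X Y) x


-- auxiliary development
noncomputable def dU (x : Finset (Vtx × Vtx)) (u : Pt) : ℕ :=
  (x.filter (fun e => e.1 = Sum.inl u)).card
noncomputable def dV (x : Finset (Vtx × Vtx)) (v : Pt) : ℕ :=
  (x.filter (fun e => e.2 = Sum.inl v)).card

lemma mem_edges {X Y : Finset Pt} {e : Vtx × Vtx} :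
    e ∈ edges X Y ↔ (∃ a ∈ X, ∃ b ∈ Y, e = (Sum.inl a, Sum.inl b)) ∨
      (∃ a ∈ X, e = (Sum.inl a, Sum.inr a)) ∨ (∃ b ∈ Y, e = (Sum.inr b, Sum.inl b)) := by
  constructor
  · intro h
    rcases Finset.mem_union.mp h with h | h
    · rcases Finset.mem_union.mp h with h | h
      · obtain ⟨ab, hab, rfl⟩ := Finset.mem_image.mp h
        obtain ⟨ha, hb⟩ := Finset.mem_product.mp hab
        exact Or.inl ⟨ab.1, ha, ab.2, hb, rfl⟩
      · obtain ⟨a, ha, rfl⟩ := Finset.mem_image.mp h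
        exact Or.inr (Or.inl ⟨a, ha, rfl⟩)
    · obtain ⟨b, hb, rfl⟩ := Finset.mem_image.mp h
      exact Or.inr (Or.inr ⟨b, hb, rfl⟩)
  · rintro (⟨a, ha, b, hb, rfl⟩ | ⟨a, ha, rfl⟩ | ⟨b, hb, rfl⟩)
    · exact Finset.mem_union.mpr (Or.inl (Finset.mem_union.mpr (Or.inl
        (Finset.mem_image.mpr ⟨(a, b), Finset.mem_product.mpr ⟨ha, hb⟩, rfl⟩))))
    · exact Finset.mem_union.mpr (Or.inl (Finset.mem_union.mpr (Or.inr
        (Finset.mem_image.mpr ⟨a, ha, rfl⟩))))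
    · exact Finset.mem_union.mpr (Or.inr (Finset.mem_image.mpr ⟨b, hb, rfl⟩))

lemma fst_inl_mem {X Y : Finset Pt} {e : Vtx × Vtx} (he : e ∈ edges X Y) {a : Pt}
    (h : e.1 = Sum.inl a) : a ∈ X := by
  rcases mem_edges.mp he with ⟨a', ha, b, hb, rfl⟩ | ⟨a', ha, rfl⟩ | ⟨b, hb, rfl⟩ <;>
    simp_all

lemma snd_inl_mem {X Y : Finset Pt} {e : Vtx × Vtx} (he : e ∈ edges X Y) {b : Pt}
    (h : e.2 = Sum.inl b) : b ∈ Y := by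
  rcases mem_edges.mp he with ⟨a', ha, b', hb, rfl⟩ | ⟨a', ha, rfl⟩ | ⟨b', hb, rfl⟩ <;>
    simp_all

lemma fst_inr_eq {X Y : Finset Pt} {e : Vtx × Vtx} (he : e ∈ edges X Y) {b : Pt}
    (h : e.1 = Sum.inr b) : e = (Sum.inr b, Sum.inl b) ∧ b ∈ Y := by
  rcases mem_edges.mp he with ⟨a', ha, b', hb, rfl⟩ | ⟨a', ha, rfl⟩ | ⟨b', hb, rfl⟩ <;>
    simp_all

lemma snd_inr_eq {X Y : Finset Pt} {e : Vtx × Vtx} (he : e ∈ edges X Y) {a : Pt}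
    (h : e.2 = Sum.inr a) : e = (Sum.inl a, Sum.inr a) ∧ a ∈ X := by
  rcases mem_edges.mp he with ⟨a', ha, b', hb, rfl⟩ | ⟨a', ha, rfl⟩ | ⟨b', hb, rfl⟩ <;>
    simp_all

lemma pendX_mem {X Y : Finset Pt} {a : Pt} (ha : a ∈ X) :
    ((Sum.inl a, Sum.inr a) : Vtx × Vtx) ∈ edges X Y :=
  mem_edges.mpr (Or.inr (Or.inl ⟨a, ha, rfl⟩))

lemma pendY_mem {X Y : Finset Pt} {b : Pt} (hb : b ∈ Y) :
    ((Sum.inr b, Sum.inl b) : Vtx × Vtx) ∈ edges X Y :=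
  mem_edges.mpr (Or.inr (Or.inr ⟨b, hb, rfl⟩))

lemma touch {X Y : Finset Pt} {e : Vtx × Vtx} (he : e ∈ edges X Y) :
    (∃ a ∈ X, e.1 = Sum.inl a) ∨ (∃ b ∈ Y, e.2 = Sum.inl b) := by
  rcases mem_edges.mp he with ⟨a', ha, b', hb, rfl⟩ | ⟨a', ha, rfl⟩ | ⟨b', hb, rfl⟩
  · exact Or.inl ⟨a', ha, rfl⟩
  · exact Or.inl ⟨a', ha, rfl⟩
  · exact Or.inr ⟨b', hb, rfl⟩


lemma lqNorm_pos {q : ℝ} (hq : 1 ≤ q) {z : Pt} (hz : z.1 ≠ 0 ∨ z.2 ≠ 0) :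
    0 < lqNorm q z := by
  have h1 : (0:ℝ) ≤ |z.1| ^ q := Real.rpow_nonneg (abs_nonneg _) q
  have h2 : (0:ℝ) ≤ |z.2| ^ q := Real.rpow_nonneg (abs_nonneg _) q
  have hsum : 0 < |z.1| ^ q + |z.2| ^ q := by
    rcases hz with hz | hz
    · have := Real.rpow_pos_of_pos (abs_pos.mpr hz) q; linarith
    · have := Real.rpow_pos_of_pos (abs_pos.mpr hz) q; linarith
  exact Real.rpow_pos_of_pos hsum _

lemma edgeWeight_pos {X Y : Finset Pt} {p q : ℝ} (hp : 1 ≤ p) (hq : 1 ≤ q)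
    (hX : ∀ z ∈ X, z.1 < z.2) (hY : ∀ z ∈ Y, z.1 < z.2)
    (hgen : ∀ a ∈ X, ∀ b ∈ Y, a ≠ b) {e : Vtx × Vtx} (he : e ∈ edges X Y) :
    0 < edgeWeight p q e.1 e.2 := by
  have key : (pos e.1 - pos e.2).1 ≠ 0 ∨ (pos e.1 - pos e.2).2 ≠ 0 := by
    rcases mem_edges.mp he with ⟨a, ha, b, hb, rfl⟩ | ⟨a, ha, rfl⟩ | ⟨b, hb, rfl⟩
    · have hab : a ≠ b := hgen a ha b hb
      by_contra h
      push_neg at h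
      obtain ⟨h1, h2⟩ := h
      simp only [pos] at h1 h2
      exact hab (Prod.ext (by linarith [sub_eq_zero.mp h1]) (by
        have := sub_eq_zero.mp h2; exact this))
    · have := hX a ha
      left
      simp only [pos, diagProj]
      intro h
      have : a.1 - (a.1 + a.2) / 2 = 0 := h
      linarith
    · have := hY b hb
      left
      simp only [pos, diagProj]
      intro h
      have : (b.1 + b.2) / 2 - b.1 = 0 := h
      linarith
  exact Real.rpow_pos_of_pos (lqNorm_pos hq key) p


lemma Fc_eq_cost {p q : ℝ} {E x : Finset (Vtx × Vtx)} (hxE : x ⊆ E) :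
    Fc p q E x = cost p q x := by
  unfold Fc cost
  rw [Finset.sum_congr rfl (fun e _ => (mul_ite _ _ _ _).trans (by rw [mul_one, mul_zero]))]
  rw [← Finset.sum_filter]
  congr 1
  ext e
  simp only [Finset.mem_filter]
  exact ⟨fun h => h.2, fun h => ⟨hxE h, h⟩⟩

lemma indicator_sum {x E : Finset (Vtx × Vtx)} (hxE : x ⊆ E)
    (P : Vtx × Vtx → Prop) [DecidablePred P] :
    ∑ e ∈ E.filter P, (if e ∈ x then (1 : ℝ) else 0) = ((x.filter P).card : ℝ) := by
  rw [Finset.sum_boole]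
  congr 2
  ext e
  simp only [Finset.mem_filter]
  tauto

lemma FU_eq {B : ℝ} {X : Finset Pt} {E x : Finset (Vtx × Vtx)} (hxE : x ⊆ E) :
    FU B X E x = B * ∑ u ∈ X, (1 - (dU x u : ℝ)) ^ 2 := by
  unfold FU dU
  congr 1
  refine Finset.sum_congr rfl fun u _ => ?_
  rw [indicator_sum hxE]

lemma FV_eq {B : ℝ} {Y : Finset Pt} {E x : Finset (Vtx × Vtx)} (hxE : x ⊆ E) :
    FV B Y E x = B * ∑ v ∈ Y, (1 - (dV x v : ℝ)) ^ 2 := by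
  unfold FV dV
  congr 1
  refine Finset.sum_congr rfl fun v _ => ?_
  rw [indicator_sum hxE]

lemma Ham_eq {B p q : ℝ} {X Y : Finset Pt} {x : Finset (Vtx × Vtx)}
    (hxE : x ⊆ edges X Y) :
    Ham B p q X Y x = cost p q x + B * ∑ u ∈ X, (1 - (dU x u : ℝ)) ^ 2
      + B * ∑ v ∈ Y, (1 - (dV x v : ℝ)) ^ 2 := by
  unfold Ham
  rw [Fc_eq_cost hxE, FU_eq hxE, FV_eq hxE]

lemma dU_erase_self {x : Finset (Vtx × Vtx)} {e : Vtx × Vtx} {u : Pt}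
    (he : e ∈ x) (h1 : e.1 = Sum.inl u) : dU (x.erase e) u = dU x u - 1 := by
  unfold dU
  rw [Finset.filter_erase, Finset.card_erase_of_mem (Finset.mem_filter.mpr ⟨he, h1⟩)]

lemma dU_erase_ne {x : Finset (Vtx × Vtx)} {e : Vtx × Vtx} {u : Pt}
    (h1 : e.1 ≠ Sum.inl u) : dU (x.erase e) u = dU x u := by
  unfold dU
  rw [Finset.filter_erase, Finset.erase_eq_of_notMem]
  simp only [Finset.mem_filter]
  tauto

lemma dV_erase_self {x : Finset (Vtx × Vtx)} {e : Vtx × Vtx} {v : Pt}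
    (he : e ∈ x) (h2 : e.2 = Sum.inl v) : dV (x.erase e) v = dV x v - 1 := by
  unfold dV
  rw [Finset.filter_erase, Finset.card_erase_of_mem (Finset.mem_filter.mpr ⟨he, h2⟩)]

lemma dV_erase_ne {x : Finset (Vtx × Vtx)} {e : Vtx × Vtx} {v : Pt}
    (h2 : e.2 ≠ Sum.inl v) : dV (x.erase e) v = dV x v := by
  unfold dV
  rw [Finset.filter_erase, Finset.erase_eq_of_notMem]
  simp only [Finset.mem_filter]
  tauto

lemma dU_insert_self {x : Finset (Vtx × Vtx)} {e : Vtx × Vtx} {u : Pt}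
    (he : e ∉ x) (h1 : e.1 = Sum.inl u) : dU (insert e x) u = dU x u + 1 := by
  unfold dU
  rw [Finset.filter_insert, if_pos h1, Finset.card_insert_of_notMem]
  simp only [Finset.mem_filter]
  tauto

lemma dU_insert_ne {x : Finset (Vtx × Vtx)} {e : Vtx × Vtx} {u : Pt}
    (h1 : e.1 ≠ Sum.inl u) : dU (insert e x) u = dU x u := by
  unfold dU
  rw [Finset.filter_insert, if_neg h1]

lemma dV_insert_self {x : Finset (Vtx × Vtx)} {e : Vtx × Vtx} {v : Pt}
    (he : e ∉ x) (h2 : e.2 = Sum.inl v) : dV (insert e x) v = dV x v + 1 := by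
  unfold dV
  rw [Finset.filter_insert, if_pos h2, Finset.card_insert_of_notMem]
  simp only [Finset.mem_filter]
  tauto

lemma dV_insert_ne {x : Finset (Vtx × Vtx)} {e : Vtx × Vtx} {v : Pt}
    (h2 : e.2 ≠ Sum.inl v) : dV (insert e x) v = dV x v := by
  unfold dV
  rw [Finset.filter_insert, if_neg h2]

lemma dU_pos_of_mem {x : Finset (Vtx × Vtx)} {e : Vtx × Vtx} {u : Pt}
    (he : e ∈ x) (h1 : e.1 = Sum.inl u) : 1 ≤ dU x u :=
  Finset.card_pos.mpr ⟨e, Finset.mem_filter.mpr ⟨he, h1⟩⟩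

lemma dV_pos_of_mem {x : Finset (Vtx × Vtx)} {e : Vtx × Vtx} {v : Pt}
    (he : e ∈ x) (h2 : e.2 = Sum.inl v) : 1 ≤ dV x v :=
  Finset.card_pos.mpr ⟨e, Finset.mem_filter.mpr ⟨he, h2⟩⟩

/-- Change of a sum when the summand changes at a single point. -/
lemma sum_update {s : Finset Pt} {f g : Pt → ℝ} {a : Pt} (ha : a ∈ s)
    (h : ∀ u ∈ s, u ≠ a → f u = g u) :
    ∑ u ∈ s, f u = (∑ u ∈ s, g u) + (f a - g a) := by
  rw [← Finset.add_sum_erase s f ha, ← Finset.add_sum_erase s g ha,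
    Finset.sum_congr rfl (fun u hu =>
      h u (Finset.mem_of_mem_erase hu) (Finset.ne_of_mem_erase hu))]
  ring

section Improve

variable {B p q : ℝ} {X Y : Finset Pt}

lemma ham_erase_ltU (hp : 1 ≤ p) (hq : 1 ≤ q)
    (hX : ∀ z ∈ X, z.1 < z.2) (hY : ∀ z ∈ Y, z.1 < z.2)
    (hgen : ∀ a ∈ X, ∀ b ∈ Y, a ≠ b)
    (hB : ∀ e ∈ edges X Y, edgeWeight p q e.1 e.2 < B)
    {x : Finset (Vtx × Vtx)} (hxE : x ⊆ edges X Y) {u : Pt} (hu : u ∈ X)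
    {e : Vtx × Vtx} (he : e ∈ x) (h1 : e.1 = Sum.inl u) (hd2 : 2 ≤ dU x u) :
    Ham B p q X Y (x.erase e) < Ham B p q X Y x := by
  have heE : e ∈ edges X Y := hxE he
  have hω : 0 < edgeWeight p q e.1 e.2 := edgeWeight_pos hp hq hX hY hgen heE
  have hBpos : 0 < B := lt_trans hω (hB e heE)
  have hx'E : x.erase e ⊆ edges X Y := (Finset.erase_subset _ _).trans hxE
  rw [Ham_eq hxE, Ham_eq hx'E]
  have hc : cost p q (x.erase e) = cost p q x - edgeWeight p q e.1 e.2 := by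
    unfold cost; rw [Finset.sum_erase_eq_sub he]
  have hcast : ((dU (x.erase e) u : ℕ) : ℝ) = (dU x u : ℝ) - 1 := by
    rw [dU_erase_self he h1, Nat.cast_sub (by omega)]; norm_num
  have hSU : ∑ u' ∈ X, (1 - (dU (x.erase e) u' : ℝ)) ^ 2
      = (∑ u' ∈ X, (1 - (dU x u' : ℝ)) ^ 2) + (3 - 2 * (dU x u : ℝ)) := by
    rw [sum_update hu (f := fun u' => (1 - (dU (x.erase e) u' : ℝ)) ^ 2)
      (g := fun u' => (1 - (dU x u' : ℝ)) ^ 2) (fun u' _ hne => by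
        have hne' : e.1 ≠ Sum.inl u' := by
          rw [h1]; exact fun h => hne (Sum.inl.inj h).symm
        simp only [dU_erase_ne hne'])]
    rw [hcast]; ring
  have hdr : (2 : ℝ) ≤ (dU x u : ℝ) := by exact_mod_cast hd2
  rcases mem_edges.mp heE with ⟨a, ha, b, hb, rfl⟩ | ⟨a, ha, rfl⟩ | ⟨b, hb, rfl⟩
  · -- e = (inl a, inl b)
    have hdb : 1 ≤ dV x b := dV_pos_of_mem he rfl
    have hcastV : ((dV (x.erase (Sum.inl a, Sum.inl b)) b : ℕ) : ℝ) = (dV x b : ℝ) - 1 := by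
      rw [dV_erase_self he rfl, Nat.cast_sub (by omega)]; norm_num
    have hSV' : ∑ v ∈ Y, (1 - (dV (x.erase (Sum.inl a, Sum.inl b)) v : ℝ)) ^ 2
        = (∑ v ∈ Y, (1 - (dV x v : ℝ)) ^ 2) + (3 - 2 * (dV x b : ℝ)) := by
      rw [sum_update hb (f := fun v => (1 - (dV (x.erase (Sum.inl a, Sum.inl b)) v : ℝ)) ^ 2)
        (g := fun v => (1 - (dV x v : ℝ)) ^ 2) (fun v _ hne => by
          have hne' : ((Sum.inl a, Sum.inl b) : Vtx × Vtx).2 ≠ Sum.inl v :=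
            fun h => hne (Sum.inl.inj h).symm
          simp only [dV_erase_ne hne'])]
      rw [hcastV]; ring
    rw [hc, hSU, hSV']
    have hdbr : (1 : ℝ) ≤ (dV x b : ℝ) := by exact_mod_cast hdb
    nlinarith [mul_le_mul_of_nonneg_left (by linarith : (3 : ℝ) - 2 * (dU x u : ℝ) ≤ -1) hBpos.le,
      mul_le_mul_of_nonneg_left (by linarith : (3 : ℝ) - 2 * (dV x b : ℝ) ≤ 1) hBpos.le]
  · -- e = (inl a, inr a)
    have hSV' : ∑ v ∈ Y, (1 - (dV (x.erase (Sum.inl a, Sum.inr a)) v : ℝ)) ^ 2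
        = ∑ v ∈ Y, (1 - (dV x v : ℝ)) ^ 2 :=
      Finset.sum_congr rfl fun v _ => by
        have hne' : ((Sum.inl a, Sum.inr a) : Vtx × Vtx).2 ≠ Sum.inl v := by simp
        simp only [dV_erase_ne hne']
    rw [hc, hSU, hSV']
    nlinarith [mul_le_mul_of_nonneg_left (by linarith : (3 : ℝ) - 2 * (dU x u : ℝ) ≤ -1) hBpos.le]
  · -- e = (inr b, inl b): impossible since e.1 = inl u
    simp at h1

lemma ham_erase_ltV (hp : 1 ≤ p) (hq : 1 ≤ q)
    (hX : ∀ z ∈ X, z.1 < z.2) (hY : ∀ z ∈ Y, z.1 < z.2)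
    (hgen : ∀ a ∈ X, ∀ b ∈ Y, a ≠ b)
    (hB : ∀ e ∈ edges X Y, edgeWeight p q e.1 e.2 < B)
    {x : Finset (Vtx × Vtx)} (hxE : x ⊆ edges X Y) {v : Pt} (hv : v ∈ Y)
    {e : Vtx × Vtx} (he : e ∈ x) (h2 : e.2 = Sum.inl v) (hd2 : 2 ≤ dV x v) :
    Ham B p q X Y (x.erase e) < Ham B p q X Y x := by
  have heE : e ∈ edges X Y := hxE he
  have hω : 0 < edgeWeight p q e.1 e.2 := edgeWeight_pos hp hq hX hY hgen heE
  have hBpos : 0 < B := lt_trans hω (hB e heE)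
  have hx'E : x.erase e ⊆ edges X Y := (Finset.erase_subset _ _).trans hxE
  rw [Ham_eq hxE, Ham_eq hx'E]
  have hc : cost p q (x.erase e) = cost p q x - edgeWeight p q e.1 e.2 := by
    unfold cost; rw [Finset.sum_erase_eq_sub he]
  have hcast : ((dV (x.erase e) v : ℕ) : ℝ) = (dV x v : ℝ) - 1 := by
    rw [dV_erase_self he h2, Nat.cast_sub (by omega)]; norm_num
  have hSV : ∑ v' ∈ Y, (1 - (dV (x.erase e) v' : ℝ)) ^ 2
      = (∑ v' ∈ Y, (1 - (dV x v' : ℝ)) ^ 2) + (3 - 2 * (dV x v : ℝ)) := by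
    rw [sum_update hv (f := fun v' => (1 - (dV (x.erase e) v' : ℝ)) ^ 2)
      (g := fun v' => (1 - (dV x v' : ℝ)) ^ 2) (fun v' _ hne => by
        have hne' : e.2 ≠ Sum.inl v' := by
          rw [h2]; exact fun h => hne (Sum.inl.inj h).symm
        simp only [dV_erase_ne hne'])]
    rw [hcast]; ring
  have hdr : (2 : ℝ) ≤ (dV x v : ℝ) := by exact_mod_cast hd2
  rcases mem_edges.mp heE with ⟨a, ha, b, hb, rfl⟩ | ⟨a, ha, rfl⟩ | ⟨b, hb, rfl⟩
  · -- e = (inl a, inl b)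
    have hda : 1 ≤ dU x a := dU_pos_of_mem he rfl
    have hcastU : ((dU (x.erase (Sum.inl a, Sum.inl b)) a : ℕ) : ℝ) = (dU x a : ℝ) - 1 := by
      rw [dU_erase_self he rfl, Nat.cast_sub (by omega)]; norm_num
    have hSU' : ∑ u ∈ X, (1 - (dU (x.erase (Sum.inl a, Sum.inl b)) u : ℝ)) ^ 2
        = (∑ u ∈ X, (1 - (dU x u : ℝ)) ^ 2) + (3 - 2 * (dU x a : ℝ)) := by
      rw [sum_update ha (f := fun u => (1 - (dU (x.erase (Sum.inl a, Sum.inl b)) u : ℝ)) ^ 2)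
        (g := fun u => (1 - (dU x u : ℝ)) ^ 2) (fun u _ hne => by
          have hne' : ((Sum.inl a, Sum.inl b) : Vtx × Vtx).1 ≠ Sum.inl u :=
            fun h => hne (Sum.inl.inj h).symm
          simp only [dU_erase_ne hne'])]
      rw [hcastU]; ring
    rw [hc, hSV, hSU']
    have hdar : (1 : ℝ) ≤ (dU x a : ℝ) := by exact_mod_cast hda
    nlinarith [mul_le_mul_of_nonneg_left (by linarith : (3 : ℝ) - 2 * (dV x v : ℝ) ≤ -1) hBpos.le,
      mul_le_mul_of_nonneg_left (by linarith : (3 : ℝ) - 2 * (dU x a : ℝ) ≤ 1) hBpos.le]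
  · -- e = (inl a, inr a): impossible since e.2 = inl v
    simp at h2
  · -- e = (inr b, inl b)
    have hSU' : ∑ u ∈ X, (1 - (dU (x.erase (Sum.inr b, Sum.inl b)) u : ℝ)) ^ 2
        = ∑ u ∈ X, (1 - (dU x u : ℝ)) ^ 2 :=
      Finset.sum_congr rfl fun u _ => by
        have hne' : ((Sum.inr b, Sum.inl b) : Vtx × Vtx).1 ≠ Sum.inl u := by simp
        simp only [dU_erase_ne hne']
    rw [hc, hSV, hSU']
    nlinarith [mul_le_mul_of_nonneg_left (by linarith : (3 : ℝ) - 2 * (dV x v : ℝ) ≤ -1) hBpos.le]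

lemma ham_insert_ltU
    (hB : ∀ e ∈ edges X Y, edgeWeight p q e.1 e.2 < B)
    {x : Finset (Vtx × Vtx)} (hxE : x ⊆ edges X Y) {u : Pt} (hu : u ∈ X)
    (hd0 : dU x u = 0) :
    Ham B p q X Y (insert ((Sum.inl u, Sum.inr u) : Vtx × Vtx) x) < Ham B p q X Y x := by
  set e : Vtx × Vtx := (Sum.inl u, Sum.inr u) with hedef
  have heE : e ∈ edges X Y := pendX_mem hu
  have hnotin : e ∉ x := fun h => by
    have := dU_pos_of_mem h (u := u) rfl; omega
  have hx'E : insert e x ⊆ edges X Y := Finset.insert_subset heE hxE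
  rw [Ham_eq hxE, Ham_eq hx'E]
  have hc : cost p q (insert e x) = cost p q x + edgeWeight p q e.1 e.2 := by
    unfold cost; rw [Finset.sum_insert hnotin]; ring
  have hSU : ∑ u' ∈ X, (1 - (dU (insert e x) u' : ℝ)) ^ 2
      = (∑ u' ∈ X, (1 - (dU x u' : ℝ)) ^ 2) - 1 := by
    rw [sum_update hu (f := fun u' => (1 - (dU (insert e x) u' : ℝ)) ^ 2)
      (g := fun u' => (1 - (dU x u' : ℝ)) ^ 2) (fun u' _ hne => by
        have hne' : e.1 ≠ Sum.inl u' := fun h => hne (Sum.inl.inj h).symm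
        simp only [dU_insert_ne hne'])]
    rw [dU_insert_self hnotin rfl, hd0]
    push_cast
    ring
  have hSV : ∑ v ∈ Y, (1 - (dV (insert e x) v : ℝ)) ^ 2
      = ∑ v ∈ Y, (1 - (dV x v : ℝ)) ^ 2 :=
    Finset.sum_congr rfl fun v _ => by
      have hne' : e.2 ≠ Sum.inl v := by simp [hedef]
      simp only [dV_insert_ne hne']
  rw [hc, hSU, hSV]
  have := hB e heE
  linarith

lemma ham_insert_ltV
    (hB : ∀ e ∈ edges X Y, edgeWeight p q e.1 e.2 < B)
    {x : Finset (Vtx × Vtx)} (hxE : x ⊆ edges X Y) {v : Pt} (hv : v ∈ Y)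
    (hd0 : dV x v = 0) :
    Ham B p q X Y (insert ((Sum.inr v, Sum.inl v) : Vtx × Vtx) x) < Ham B p q X Y x := by
  set e : Vtx × Vtx := (Sum.inr v, Sum.inl v) with hedef
  have heE : e ∈ edges X Y := pendY_mem hv
  have hnotin : e ∉ x := fun h => by
    have := dV_pos_of_mem h (v := v) rfl; omega
  have hx'E : insert e x ⊆ edges X Y := Finset.insert_subset heE hxE
  rw [Ham_eq hxE, Ham_eq hx'E]
  have hc : cost p q (insert e x) = cost p q x + edgeWeight p q e.1 e.2 := by
    unfold cost; rw [Finset.sum_insert hnotin]; ring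
  have hSV : ∑ v' ∈ Y, (1 - (dV (insert e x) v' : ℝ)) ^ 2
      = (∑ v' ∈ Y, (1 - (dV x v' : ℝ)) ^ 2) - 1 := by
    rw [sum_update hv (f := fun v' => (1 - (dV (insert e x) v' : ℝ)) ^ 2)
      (g := fun v' => (1 - (dV x v' : ℝ)) ^ 2) (fun v' _ hne => by
        have hne' : e.2 ≠ Sum.inl v' := fun h => hne (Sum.inl.inj h).symm
        simp only [dV_insert_ne hne'])]
    rw [dV_insert_self hnotin rfl, hd0]
    push_cast
    ring
  have hSU : ∑ u ∈ X, (1 - (dU (insert e x) u : ℝ)) ^ 2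
      = ∑ u ∈ X, (1 - (dU x u : ℝ)) ^ 2 :=
    Finset.sum_congr rfl fun u _ => by
      have hne' : e.1 ≠ Sum.inl u := by simp [hedef]
      simp only [dU_insert_ne hne']
  rw [hc, hSU, hSV]
  have := hB e heE
  linarith

end Improve

def IsPerfect (X Y : Finset Pt) (x : Finset (Vtx × Vtx)) : Prop :=
  (∀ u ∈ X, dU x u = 1) ∧ (∀ v ∈ Y, dV x v = 1)

lemma two_le_dU {x : Finset (Vtx × Vtx)} {u : Pt} {e e' : Vtx × Vtx}
    (he : e ∈ x) (he' : e' ∈ x) (hne : e ≠ e') (h1 : e.1 = Sum.inl u)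
    (h1' : e'.1 = Sum.inl u) : 2 ≤ dU x u := by
  apply Finset.one_lt_card.mpr
  exact ⟨e, Finset.mem_filter.mpr ⟨he, h1⟩, e', Finset.mem_filter.mpr ⟨he', h1'⟩, hne⟩

lemma two_le_dV {x : Finset (Vtx × Vtx)} {v : Pt} {e e' : Vtx × Vtx}
    (he : e ∈ x) (he' : e' ∈ x) (hne : e ≠ e') (h2 : e.2 = Sum.inl v)
    (h2' : e'.2 = Sum.inl v) : 2 ≤ dV x v := by
  apply Finset.one_lt_card.mpr
  exact ⟨e, Finset.mem_filter.mpr ⟨he, h2⟩, e', Finset.mem_filter.mpr ⟨he', h2'⟩, hne⟩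

lemma dU_one_exists {x : Finset (Vtx × Vtx)} {u : Pt} (h : 1 ≤ dU x u) :
    ∃ e ∈ x, e.1 = Sum.inl u := by
  obtain ⟨e, he⟩ := Finset.card_pos.mp h
  exact ⟨e, (Finset.mem_filter.mp he).1, (Finset.mem_filter.mp he).2⟩

lemma dV_one_exists {x : Finset (Vtx × Vtx)} {v : Pt} (h : 1 ≤ dV x v) :
    ∃ e ∈ x, e.2 = Sum.inl v := by
  obtain ⟨e, he⟩ := Finset.card_pos.mp h
  exact ⟨e, (Finset.mem_filter.mp he).1, (Finset.mem_filter.mp he).2⟩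

/-- A perfect (all degrees = 1) subset of `E` is a maximal matching. -/
lemma perfect_maximal {X Y : Finset Pt} {x : Finset (Vtx × Vtx)}
    (hxE : x ⊆ edges X Y) (hperf : IsPerfect X Y x) :
    IsMaximalMatching (edges X Y) x := by
  obtain ⟨hU, hV⟩ := hperf
  have hmatch : IsMatching x := by
    intro e he e' he' hne
    constructor
    · intro hfst
      rcases h1 : e.1 with a | b
      · have ha : a ∈ X := fst_inl_mem (hxE he) h1
        have h2le := two_le_dU he he' hne h1 (hfst ▸ h1)
        have h1eq := hU a ha
        omega
      · obtain ⟨heq, hb⟩ := fst_inr_eq (hxE he) h1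
        obtain ⟨heq', _⟩ := fst_inr_eq (hxE he') (hfst ▸ h1)
        exact hne (heq.trans heq'.symm)
    · intro hsnd
      rcases h2 : e.2 with b | a
      · have hb : b ∈ Y := snd_inl_mem (hxE he) h2
        have h2le := two_le_dV he he' hne h2 (hsnd ▸ h2)
        have h1eq := hV b hb
        omega
      · obtain ⟨heq, ha⟩ := snd_inr_eq (hxE he) h2
        obtain ⟨heq', _⟩ := snd_inr_eq (hxE he') (hsnd ▸ h2)
        exact hne (heq.trans heq'.symm)
  refine ⟨hxE, hmatch, fun y hyE hymatch hxy => ?_⟩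
  refine Finset.Subset.antisymm hxy fun f hf => ?_
  by_contra hfx
  rcases touch (hyE hf) with ⟨a, ha, h1⟩ | ⟨b, hb, h2⟩
  · obtain ⟨e, hex, he1⟩ := dU_one_exists (by rw [hU a ha])
    have hne : e ≠ f := fun h => hfx (h ▸ hex)
    exact (hymatch e (hxy hex) f hf hne).1 (he1.trans h1.symm)
  · obtain ⟨e, hex, he2⟩ := dV_one_exists (by rw [hV b hb])
    have hne : e ≠ f := fun h => hfx (h ▸ hex)
    exact (hymatch e (hxy hex) f hf hne).2 (he2.trans h2.symm)

/-- A maximal matching is perfect: every point of `X` and `Y` is saturated exactly once. -/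
lemma maximal_perfect {X Y : Finset Pt} {x : Finset (Vtx × Vtx)}
    (h : IsMaximalMatching (edges X Y) x) : IsPerfect X Y x := by
  obtain ⟨hxE, hmatch, hmax⟩ := h
  have hUle : ∀ u, dU x u ≤ 1 := by
    intro u
    by_contra h
    obtain ⟨e, he, e', he', hne⟩ := Finset.one_lt_card.mp (by omega : 1 < dU x u)
    exact (hmatch e (Finset.mem_filter.mp he).1 e' (Finset.mem_filter.mp he').1 hne).1
      ((Finset.mem_filter.mp he).2.trans (Finset.mem_filter.mp he').2.symm)
  have hVle : ∀ v, dV x v ≤ 1 := by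
    intro v
    by_contra h
    obtain ⟨e, he, e', he', hne⟩ := Finset.one_lt_card.mp (by omega : 1 < dV x v)
    exact (hmatch e (Finset.mem_filter.mp he).1 e' (Finset.mem_filter.mp he').1 hne).2
      ((Finset.mem_filter.mp he).2.trans (Finset.mem_filter.mp he').2.symm)
  constructor
  · intro u hu
    rcases Nat.lt_or_ge (dU x u) 1 with h0 | h1
    · exfalso
      have hd0 : dU x u = 0 := by omega
      set e : Vtx × Vtx := (Sum.inl u, Sum.inr u) with hedef
      have hnotin : e ∉ x := fun h => by have := dU_pos_of_mem h (u := u) rfl; omega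
      have hins : IsMatching (insert e x) := by
        intro f hf f' hf' hne
        rcases Finset.mem_insert.mp hf with rfl | hf <;>
          rcases Finset.mem_insert.mp hf' with h' | hf'
        · exact absurd h'.symm hne
        · constructor
          · intro hh
            have := dU_pos_of_mem hf' (u := u) hh.symm
            omega
          · intro hh
            obtain ⟨heq, _⟩ := snd_inr_eq (hxE hf') hh.symm
            have := dU_pos_of_mem hf' (u := u) (by rw [heq])
            omega
        · subst h'
          constructor
          · intro hh
            have := dU_pos_of_mem hf (u := u) hh
            omega
          · intro hh
            obtain ⟨heq, _⟩ := snd_inr_eq (hxE hf) hh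
            have := dU_pos_of_mem hf (u := u) (by rw [heq])
            omega
        · exact hmatch f hf f' hf' hne
      have := hmax (insert e x) (Finset.insert_subset (pendX_mem hu) hxE) hins
        (Finset.subset_insert _ _)
      exact hnotin (this ▸ Finset.mem_insert_self e x)
    · have := hUle u; omega
  · intro v hv
    rcases Nat.lt_or_ge (dV x v) 1 with h0 | h1
    · exfalso
      have hd0 : dV x v = 0 := by omega
      set e : Vtx × Vtx := (Sum.inr v, Sum.inl v) with hedef
      have hnotin : e ∉ x := fun h => by have := dV_pos_of_mem h (v := v) rfl; omega
      have hins : IsMatching (insert e x) := by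
        intro f hf f' hf' hne
        rcases Finset.mem_insert.mp hf with rfl | hf <;>
          rcases Finset.mem_insert.mp hf' with h' | hf'
        · exact absurd h'.symm hne
        · constructor
          · intro hh
            obtain ⟨heq, _⟩ := fst_inr_eq (hxE hf') hh.symm
            have := dV_pos_of_mem hf' (v := v) (by rw [heq])
            omega
          · intro hh
            have := dV_pos_of_mem hf' (v := v) hh.symm
            omega
        · subst h'
          constructor
          · intro hh
            obtain ⟨heq, _⟩ := fst_inr_eq (hxE hf) hh
            have := dV_pos_of_mem hf (v := v) (by rw [heq])
            omega
          · intro hh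
            have := dV_pos_of_mem hf (v := v) hh
            omega
        · exact hmatch f hf f' hf' hne
      have := hmax (insert e x) (Finset.insert_subset (pendY_mem hv) hxE) hins
        (Finset.subset_insert _ _)
      exact hnotin (this ▸ Finset.mem_insert_self e x)
    · have := hVle v; omega

lemma ham_eq_cost_of_perfect {B p q : ℝ} {X Y : Finset Pt} {x : Finset (Vtx × Vtx)}
    (hxE : x ⊆ edges X Y) (hperf : IsPerfect X Y x) :
    Ham B p q X Y x = cost p q x := by
  rw [Ham_eq hxE]
  have h1 : ∑ u ∈ X, (1 - (dU x u : ℝ)) ^ 2 = 0 :=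
    Finset.sum_eq_zero fun u hu => by rw [hperf.1 u hu]; norm_num
  have h2 : ∑ v ∈ Y, (1 - (dV x v : ℝ)) ^ 2 = 0 :=
    Finset.sum_eq_zero fun v hv => by rw [hperf.2 v hv]; norm_num
  rw [h1, h2]
  ring

noncomputable def defc (X Y : Finset Pt) (x : Finset (Vtx × Vtx)) : ℕ :=
  ∑ u ∈ X, (1 - dU x u) + ∑ v ∈ Y, (1 - dV x v)

lemma phase1 {B p q : ℝ} {X Y : Finset Pt} (hp : 1 ≤ p) (hq : 1 ≤ q)
    (hX : ∀ z ∈ X, z.1 < z.2) (hY : ∀ z ∈ Y, z.1 < z.2)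
    (hgen : ∀ a ∈ X, ∀ b ∈ Y, a ≠ b)
    (hB : ∀ e ∈ edges X Y, edgeWeight p q e.1 e.2 < B) :
    ∀ (n : ℕ) (x : Finset (Vtx × Vtx)), x.card ≤ n → x ⊆ edges X Y →
      ∃ m, m ⊆ edges X Y ∧ (∀ u ∈ X, dU m u ≤ 1) ∧ (∀ v ∈ Y, dV m v ≤ 1) ∧
        Ham B p q X Y m ≤ Ham B p q X Y x := by
  intro n
  induction n with
  | zero =>
    intro x hcard hxE
    refine ⟨x, hxE, fun u _ => ?_, fun v _ => ?_, le_refl _⟩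
    · exact le_trans (le_trans (Finset.card_filter_le _ _) hcard) (by norm_num)
    · exact le_trans (le_trans (Finset.card_filter_le _ _) hcard) (by norm_num)
  | succ n ih =>
    intro x hcard hxE
    by_cases hall : (∀ u ∈ X, dU x u ≤ 1) ∧ (∀ v ∈ Y, dV x v ≤ 1)
    · exact ⟨x, hxE, hall.1, hall.2, le_refl _⟩
    · rw [not_and_or] at hall
      have key : ∃ x', x' ⊆ edges X Y ∧ x'.card ≤ n ∧
          Ham B p q X Y x' < Ham B p q X Y x := by
        rcases hall with hall | hall
        · push_neg at hall
          obtain ⟨u, hu, hd⟩ := hall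
          obtain ⟨e, he, h1⟩ := dU_one_exists (x := x) (u := u) (by omega)
          refine ⟨x.erase e, (Finset.erase_subset _ _).trans hxE, ?_, ?_⟩
          · rw [Finset.card_erase_of_mem he]; omega
          · exact ham_erase_ltU hp hq hX hY hgen hB hxE hu he h1 (by omega)
        · push_neg at hall
          obtain ⟨v, hv, hd⟩ := hall
          obtain ⟨e, he, h2⟩ := dV_one_exists (x := x) (v := v) (by omega)
          refine ⟨x.erase e, (Finset.erase_subset _ _).trans hxE, ?_, ?_⟩
          · rw [Finset.card_erase_of_mem he]; omega
          · exact ham_erase_ltV hp hq hX hY hgen hB hxE hv he h2 (by omega)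
      obtain ⟨x', hx'E, hx'card, hlt⟩ := key
      obtain ⟨m, hmE, hmu, hmv, hm⟩ := ih x' hx'card hx'E
      exact ⟨m, hmE, hmu, hmv, le_of_lt (lt_of_le_of_lt hm hlt)⟩

lemma phase2 {B p q : ℝ} {X Y : Finset Pt}
    (hB : ∀ e ∈ edges X Y, edgeWeight p q e.1 e.2 < B) :
    ∀ (n : ℕ) (x : Finset (Vtx × Vtx)), defc X Y x ≤ n → x ⊆ edges X Y →
      (∀ u ∈ X, dU x u ≤ 1) → (∀ v ∈ Y, dV x v ≤ 1) →
      ∃ m, m ⊆ edges X Y ∧ IsPerfect X Y m ∧ Ham B p q X Y m ≤ Ham B p q X Y x := by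
  intro n
  induction n with
  | zero =>
    intro x hdef hxE hU hV
    refine ⟨x, hxE, ⟨fun u hu => ?_, fun v hv => ?_⟩, le_refl _⟩
    · have h1 : ∑ u ∈ X, (1 - dU x u) = 0 := by unfold defc at hdef; omega
      have := (Finset.sum_eq_zero_iff.mp h1) u hu
      have := hU u hu
      omega
    · have h2 : ∑ v ∈ Y, (1 - dV x v) = 0 := by
        have : defc X Y x = 0 := by omega
        unfold defc at this; omega
      have := (Finset.sum_eq_zero_iff.mp h2) v hv
      have := hV v hv
      omega
  | succ n ih =>
    intro x hdef hxE hU hV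
    by_cases hperf : IsPerfect X Y x
    · exact ⟨x, hxE, hperf, le_refl _⟩
    · unfold IsPerfect at hperf
      rw [not_and_or] at hperf
      have key : ∃ x', x' ⊆ edges X Y ∧ (∀ u ∈ X, dU x' u ≤ 1) ∧
          (∀ v ∈ Y, dV x' v ≤ 1) ∧ defc X Y x' < defc X Y x ∧
          Ham B p q X Y x' < Ham B p q X Y x := by
        rcases hperf with h | h
        · push_neg at h
          obtain ⟨u, hu, hd⟩ := h
          have hd0 : dU x u = 0 := by have := hU u hu; omega
          set e : Vtx × Vtx := (Sum.inl u, Sum.inr u) with hedef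
          have hnotin : e ∉ x := fun h => by
            have := dU_pos_of_mem h (u := u) rfl; omega
          refine ⟨insert e x, Finset.insert_subset (pendX_mem hu) hxE, ?_, ?_, ?_, ?_⟩
          · intro u' hu'
            by_cases huu : u' = u
            · subst huu; rw [dU_insert_self hnotin rfl, hd0]
            · rw [dU_insert_ne (fun h => huu (Sum.inl.inj h).symm)]
              exact hU u' hu'
          · intro v hv
            rw [dV_insert_ne (by simp [hedef])]
            exact hV v hv
          · unfold defc
            have hVsum : ∑ v ∈ Y, (1 - dV (insert e x) v) = ∑ v ∈ Y, (1 - dV x v) :=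
              Finset.sum_congr rfl fun v _ => by rw [dV_insert_ne (by simp [hedef])]
            rw [hVsum]
            apply Nat.add_lt_add_right
            apply Finset.sum_lt_sum
            · intro u' hu'
              by_cases huu : u' = u
              · subst huu; rw [dU_insert_self hnotin rfl, hd0]; omega
              · rw [dU_insert_ne (fun h => huu (Sum.inl.inj h).symm)]
            · refine ⟨u, hu, ?_⟩
              rw [dU_insert_self hnotin rfl, hd0]
              omega
          · exact ham_insert_ltU hB hxE hu hd0
        · push_neg at h
          obtain ⟨v, hv, hd⟩ := h
          have hd0 : dV x v = 0 := by have := hV v hv; omega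
          set e : Vtx × Vtx := (Sum.inr v, Sum.inl v) with hedef
          have hnotin : e ∉ x := fun h => by
            have := dV_pos_of_mem h (v := v) rfl; omega
          refine ⟨insert e x, Finset.insert_subset (pendY_mem hv) hxE, ?_, ?_, ?_, ?_⟩
          · intro u hu
            rw [dU_insert_ne (by simp [hedef])]
            exact hU u hu
          · intro v' hv'
            by_cases hvv : v' = v
            · subst hvv; rw [dV_insert_self hnotin rfl, hd0]
            · rw [dV_insert_ne (fun h => hvv (Sum.inl.inj h).symm)]
              exact hV v' hv'
          · unfold defc
            have hUsum : ∑ u ∈ X, (1 - dU (insert e x) u) = ∑ u ∈ X, (1 - dU x u) :=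
              Finset.sum_congr rfl fun u _ => by rw [dU_insert_ne (by simp [hedef])]
            rw [hUsum]
            apply Nat.add_lt_add_left
            apply Finset.sum_lt_sum
            · intro v' hv'
              by_cases hvv : v' = v
              · subst hvv; rw [dV_insert_self hnotin rfl, hd0]; omega
              · rw [dV_insert_ne (fun h => hvv (Sum.inl.inj h).symm)]
            · refine ⟨v, hv, ?_⟩
              rw [dV_insert_self hnotin rfl, hd0]
              omega
          · exact ham_insert_ltV hB hxE hv hd0
      obtain ⟨x', hx'E, hU', hV', hdef', hlt⟩ := key
      obtain ⟨m, hmE, hmperf, hm⟩ := ih x' (by omega) hx'E hU' hV'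
      exact ⟨m, hmE, hmperf, le_of_lt (lt_of_le_of_lt hm hlt)⟩

lemma exists_perfect_le {B p q : ℝ} {X Y : Finset Pt} (hp : 1 ≤ p) (hq : 1 ≤ q)
    (hX : ∀ z ∈ X, z.1 < z.2) (hY : ∀ z ∈ Y, z.1 < z.2)
    (hgen : ∀ a ∈ X, ∀ b ∈ Y, a ≠ b)
    (hB : ∀ e ∈ edges X Y, edgeWeight p q e.1 e.2 < B)
    {x : Finset (Vtx × Vtx)} (hxE : x ⊆ edges X Y) :
    ∃ m, m ⊆ edges X Y ∧ IsPerfect X Y m ∧ Ham B p q X Y m ≤ Ham B p q X Y x := by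
  obtain ⟨m₁, hm₁E, hU₁, hV₁, hle₁⟩ :=
    phase1 hp hq hX hY hgen hB x.card x (le_refl _) hxE
  obtain ⟨m, hmE, hmperf, hle⟩ :=
    phase2 hB (defc X Y m₁) m₁ (le_refl _) hm₁E hU₁ hV₁
  exact ⟨m, hmE, hmperf, le_trans hle hle₁⟩


/-- Main theorem. Assume genericity and `B > B* = max_{e ∈ E} ω(e)`.
A subset `x ⊆ E` minimizes `H` over all subsets of `E` if and only if `x` is a
minimum-cost maximal matching of `G̃`. -/
theorem min_H_iff_MCMM (B p q : ℝ) (hp : 1 ≤ p) (hq : 1 ≤ q)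
    (X Y : Finset Pt) (hX : ∀ z ∈ X, z.1 < z.2) (hY : ∀ z ∈ Y, z.1 < z.2)
    (hgen : ∀ a ∈ X, ∀ b ∈ Y, a ≠ b)
    (hB : ∀ e ∈ edges X Y, edgeWeight p q e.1 e.2 < B)
    (x : Finset (Vtx × Vtx)) (hxE : x ⊆ edges X Y) :
    (∀ x' ⊆ edges X Y, Ham B p q X Y x ≤ Ham B p q X Y x') ↔
      (IsMaximalMatching (edges X Y) x ∧
        ∀ x', IsMaximalMatching (edges X Y) x' → cost p q x ≤ cost p q x') := by
  constructor
  · intro hmin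
    have hperf : IsPerfect X Y x := by
      by_contra hnp
      unfold IsPerfect at hnp
      rw [not_and_or] at hnp
      rcases hnp with h | h
      · push_neg at h
        obtain ⟨u, hu, hd⟩ := h
        rcases Nat.lt_or_ge (dU x u) 1 with h0 | h1
        · have hd0 : dU x u = 0 := by omega
          have hlt := ham_insert_ltU hB hxE hu hd0
          have := hmin _ (Finset.insert_subset (pendX_mem hu) hxE)
          linarith
        · have hd2 : 2 ≤ dU x u := by omega
          obtain ⟨e, he, h1⟩ := dU_one_exists (x := x) (u := u) (by omega)
          have hlt := ham_erase_ltU hp hq hX hY hgen hB hxE hu he h1 hd2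
          have := hmin (x.erase e) ((Finset.erase_subset e x).trans hxE)
          linarith
      · push_neg at h
        obtain ⟨v, hv, hd⟩ := h
        rcases Nat.lt_or_ge (dV x v) 1 with h0 | h1
        · have hd0 : dV x v = 0 := by omega
          have hlt := ham_insert_ltV hB hxE hv hd0
          have := hmin _ (Finset.insert_subset (pendY_mem hv) hxE)
          linarith
        · have hd2 : 2 ≤ dV x v := by omega
          obtain ⟨e, he, h2⟩ := dV_one_exists (x := x) (v := v) (by omega)
          have hlt := ham_erase_ltV hp hq hX hY hgen hB hxE hv he h2 hd2
          have := hmin (x.erase e) ((Finset.erase_subset e x).trans hxE)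
          linarith
    refine ⟨perfect_maximal hxE hperf, fun x' hx' => ?_⟩
    have hperf' := maximal_perfect hx'
    calc cost p q x = Ham B p q X Y x := (ham_eq_cost_of_perfect hxE hperf).symm
      _ ≤ Ham B p q X Y x' := hmin x' hx'.1
      _ = cost p q x' := ham_eq_cost_of_perfect hx'.1 hperf'
  · rintro ⟨hmm, hmincost⟩ x' hx'E
    obtain ⟨m, hmE, hmperf, hle⟩ := exists_perfect_le hp hq hX hY hgen hB hx'E
    have hmmax := perfect_maximal hmE hmperf
    have hxperf := maximal_perfect hmm
    calc Ham B p q X Y x = cost p q x := ham_eq_cost_of_perfect hxE hxperf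
      _ ≤ cost p q m := hmincost m hmmax
      _ = Ham B p q X Y m := (ham_eq_cost_of_perfect hmE hmperf).symm
      _ ≤ Ham B p q X Y x' := hle
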